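/- arXiv:2404.01138 — 2 statements merged into one kernel-verified Lean document; each statement's English description precedes it below -/
import Mathlib

section
/- On ℂ² ⊗ (ℂ²)^{⊗3}, define Ry(θ) := [[cos(θ/2), −sin(θ/2)], [sin(θ/2), cos(θ/2)]], and for a permutation c ∈ S₃ the controlled gate C-P(c) := |0⟩⟨0|⊗I₈ + |1⟩⟨1|⊗P₃(c). Set α = γ = −arctan(√2) and β = arccos(−1/3), and U := (Ry(γ)⊗I₈)·C-P((132))·(Ry(β)⊗I₈)·C-P((123))·(Ry(α)⊗I₈). Then (⟨0|⊗I₈)·U·(|0⟩⊗I₈) = Π₃, the projector onto the symmetric subspace of (ℂ²)^{⊗3}. (Proposition: simplified purification circuit for three noisy qubits.) -/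
open Matrix Kronecker

/-- Permutation matrix on `(ℂ^d)^{⊗n}` permuting tensor factors. -/
noncomputable def permMat (n d : ℕ) (σ : Equiv.Perm (Fin n)) :
    Matrix (Fin n → Fin d) (Fin n → Fin d) ℂ :=
  Matrix.of fun v w => if v = w ∘ σ then 1 else 0

/-- Projector onto the symmetric subspace of `(ℂ^d)^{⊗n}`. -/
noncomputable def symProj (n d : ℕ) :
    Matrix (Fin n → Fin d) (Fin n → Fin d) ℂ :=
  ((n.factorial : ℂ)⁻¹) • ∑ σ : Equiv.Perm (Fin n), permMat n d σ

/-- The rotation gate `Ry(θ) = [[cos(θ/2), −sin(θ/2)], [sin(θ/2), cos(θ/2)]]`. -/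
noncomputable def Ry (θ : ℝ) : Matrix (Fin 2) (Fin 2) ℂ :=
  !![((Real.cos (θ / 2) : ℝ) : ℂ), -((Real.sin (θ / 2) : ℝ) : ℂ);
     ((Real.sin (θ / 2) : ℝ) : ℂ), ((Real.cos (θ / 2) : ℝ) : ℂ)]

/-- The controlled-permutation gate `C-P(c) = |0⟩⟨0|⊗I₈ + |1⟩⟨1|⊗P₃(c)`
on `ℂ² ⊗ (ℂ²)^{⊗3}`. -/
noncomputable def CP (c : Equiv.Perm (Fin 3)) :
    Matrix (Fin 2 × (Fin 3 → Fin 2)) (Fin 2 × (Fin 3 → Fin 2)) ℂ :=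
  (Matrix.single (0 : Fin 2) (0 : Fin 2) (1 : ℂ)) ⊗ₖ
      (1 : Matrix (Fin 3 → Fin 2) (Fin 3 → Fin 2) ℂ)
    + (Matrix.single (1 : Fin 2) (1 : Fin 2) (1 : ℂ)) ⊗ₖ permMat 3 2 c

/-- The three-cycle `(123)` of `S₃` (zero-indexed: `0 → 1 → 2 → 0`). -/
def c123 : Equiv.Perm (Fin 3) := finRotate 3

/-- The three-cycle `(132)` of `S₃` (zero-indexed: `0 → 2 → 1 → 0`). -/
def c132 : Equiv.Perm (Fin 3) := (finRotate 3)⁻¹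

/-!
Expanding both controlled gates, the circuit is `∑_{a,b} (Ry γ Eₐ Ry β E_b Ry α) ⊗ P_a Q_b` with
`E₀, E₁` the projectors onto `|0⟩, |1⟩`, `P₀ = Q₀ = 1`, `P₁ = P((132))`, `Q₁ = P((123))`, and
`P₁ Q₁ = 1`. Its top-left block is therefore a combination of `1`, `P((123))`, `P((132))`, whose
coefficients are `cos α cos (β/2)` and `-sin α sin (β/2) / 2` when `α = γ`; both equal `1/3` for the
given angles. On the other hand `Λ³ ℂ² = 0`, so the transpositions sum to the same as the even
permutations and `Π₃ = (1 + P((123)) + P((132))) / 3`.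
-/

open Equiv Equiv.Perm Finset

section PermMat

variable {n d : ℕ}

theorem permMat_one : permMat n d 1 = 1 := by
  ext v w
  simp [permMat, Matrix.one_apply]

theorem permMat_mul (σ τ : Perm (Fin n)) :
    permMat n d σ * permMat n d τ = permMat n d (τ * σ) := by
  ext v w
  rw [Matrix.mul_apply, Finset.sum_eq_single (w ∘ τ)]
  · simp [permMat, Function.comp_assoc]
    congr
  · intro u _ hu
    simp [permMat, hu]
  · simp

theorem sum_sign_smul_permMat_eq_zero (h : d < n) :
    ∑ σ : Perm (Fin n), ((sign σ : ℤ) : ℂ) • permMat n d σ = 0 := by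
  ext v w
  -- by pigeonhole `w` is invariant under a transposition, and left multiplication by it flips signs
  obtain ⟨i, j, hij, hw⟩ := Fintype.exists_ne_map_eq_of_card_lt w (by simpa using h)
  have hwt : w ∘ swap i j = w := by
    ext k
    rcases eq_or_ne k i with rfl | hki
    · simp [hw]
    rcases eq_or_ne k j with rfl | hkj
    · simp [hw]
    · simp [swap_apply_of_ne_of_ne hki hkj]
  let f : Perm (Fin n) → ℂ := fun σ => if v = w ∘ σ then ((sign σ : ℤ) : ℂ) else 0
  have hf : ∀ σ, f σ = -f (swap i j * σ) := fun σ => by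
    simp only [f, Perm.sign_mul, sign_swap hij, Perm.coe_mul, ← Function.comp_assoc, hwt]
    split_ifs <;> simp
  have hsum : ∑ σ, f σ = -∑ σ, f σ := by
    rw [← Finset.sum_neg_distrib]
    exact Fintype.sum_equiv (Equiv.mulLeft (swap i j)) _ _ hf
  simpa [Matrix.sum_apply, permMat, f] using self_eq_neg.mp hsum

end PermMat

theorem symProj_three_two :
    symProj 3 2 = (3 : ℂ)⁻¹ • (1 + permMat 3 2 c123 + permMat 3 2 c132) := by
  have huniv : (univ : Finset (Perm (Fin 3))) =
      {1, c123, c132, swap 0 1, swap 0 2, swap 1 2} := by decide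
  -- the vanishing antisymmetrizer trades the three transpositions for the three even permutations
  have hanti := sum_sign_smul_permMat_eq_zero (n := 3) (d := 2) (by norm_num)
  rw [huniv] at hanti
  rw [symProj, huniv]
  have hc123 : sign c123 = 1 := by decide
  have hc132 : sign c132 = 1 := by decide
  simp (disch := decide) only [Finset.sum_insert, Finset.sum_singleton, Perm.sign_one, hc123,
    hc132, sign_swap, permMat_one] at hanti ⊢
  push_cast [Nat.factorial] at hanti ⊢
  linear_combination (norm := module) (-(6 : ℂ)⁻¹) • hanti

theorem permMat_c132_mul_c123 : permMat 3 2 c132 * permMat 3 2 c123 = 1 := by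
  rw [permMat_mul, show c123 * c132 = 1 by decide, permMat_one]

section Controlled

variable {m R : Type*} [Fintype m] [DecidableEq m] [CommRing R]

def controlled (P : Matrix m m R) : Matrix (Fin 2 × m) (Fin 2 × m) R :=
  single 0 0 1 ⊗ₖ 1 + single 1 1 1 ⊗ₖ P

theorem kronecker_one_mul_controlled_mul (A B C : Matrix (Fin 2) (Fin 2) R)
    (P Q : Matrix m m R) :
    (A ⊗ₖ 1) * controlled P * (B ⊗ₖ 1) * controlled Q * (C ⊗ₖ 1) =
      (A * single 0 0 1 * B * single 0 0 1 * C) ⊗ₖ 1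
        + (A * single 0 0 1 * B * single 1 1 1 * C) ⊗ₖ Q
        + (A * single 1 1 1 * B * single 0 0 1 * C) ⊗ₖ P
        + (A * single 1 1 1 * B * single 1 1 1 * C) ⊗ₖ (P * Q) := by
  simp only [controlled, Matrix.add_mul, Matrix.mul_add, ← mul_kronecker_mul, Matrix.one_mul,
    Matrix.mul_one, Matrix.mul_assoc]
  abel

end Controlled

theorem CP_eq_controlled (c : Perm (Fin 3)) : CP c = controlled (permMat 3 2 c) := rfl

theorem submatrix_prodMk_kronecker {l m n R : Type*} [Mul R] (A : Matrix l l R)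
    (B : Matrix m n R) (i j : l) :
    (A ⊗ₖ B).submatrix (Prod.mk i) (Prod.mk j) = A i j • B := by
  ext
  simp

theorem mul_single_mul_single_mul_apply {n R : Type*} [Fintype n] [DecidableEq n] [Semiring R]
    (A B C : Matrix n n R) (a b i j : n) :
    (A * single a a (1 : R) * B * single b b (1 : R) * C) i j = A i a * B a b * C b j := by
  rw [Matrix.mul_assoc (A * _), Matrix.mul_assoc A, ← Matrix.mul_assoc (single a a 1),
    single_mul_mul_single]
  simp [Matrix.mul_apply, single_apply, ite_and, mul_assoc]

theorem submatrix_zero_Ry_controlled_Ry_controlled_Ry {m : Type*} [Fintype m] [DecidableEq m]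
    (θ φ : ℝ) (P Q : Matrix m m ℂ) (hPQ : P * Q = 1) :
    ((Ry θ ⊗ₖ 1) * controlled P * (Ry φ ⊗ₖ 1) * controlled Q * (Ry θ ⊗ₖ 1)).submatrix
        (Prod.mk 0) (Prod.mk 0) =
      ((Real.cos θ * Real.cos (φ / 2) : ℝ) : ℂ) • 1
        - ((Real.sin θ * Real.sin (φ / 2) / 2 : ℝ) : ℂ) • (P + Q) := by
  have hcos : Real.cos θ = Real.cos (θ / 2) ^ 2 - Real.sin (θ / 2) ^ 2 := by
    rw [← Real.cos_two_mul', mul_div_cancel₀ θ two_ne_zero]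
  have hsin : Real.sin θ = 2 * Real.sin (θ / 2) * Real.cos (θ / 2) := by
    rw [← Real.sin_two_mul, mul_div_cancel₀ θ two_ne_zero]
  rw [kronecker_one_mul_controlled_mul, hPQ]
  simp only [submatrix_add, Pi.add_apply, submatrix_prodMk_kronecker,
    mul_single_mul_single_mul_apply]
  simp only [Ry, of_apply, cons_val', cons_val_zero, cons_val_one, cons_val_fin_one, hcos, hsin]
  push_cast
  module

section Angles

open Real

theorem cos_neg_arctan_sqrt_two : cos (-arctan √2) = (√3)⁻¹ := by
  rw [cos_neg, cos_arctan, sq_sqrt zero_le_two]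
  norm_num

theorem sin_neg_arctan_sqrt_two : sin (-arctan √2) = -(√2 / √3) := by
  rw [sin_neg, sin_arctan, sq_sqrt zero_le_two]
  norm_num

theorem cos_half_arccos_neg_third : cos (arccos (-(1 / 3)) / 2) = (√3)⁻¹ := by
  rw [cos_half (by linarith [arccos_nonneg (-(1 / 3)), pi_pos]) (arccos_le_pi _),
    cos_arccos (by norm_num) (by norm_num), ← sqrt_inv]
  norm_num

theorem sin_half_arccos_neg_third : sin (arccos (-(1 / 3)) / 2) = √2 / √3 := by
  rw [sin_half_eq_sqrt (arccos_nonneg _) (by linarith [arccos_le_pi (-(1 / 3)), pi_pos]),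
    cos_arccos (by norm_num) (by norm_num), ← sqrt_div zero_le_two]
  norm_num

end Angles

/-- simplified purification circuit for three noisy qubits.
With `α = γ = −arctan √2`, `β = arccos(−1/3)` and
`U = (Ry(γ)⊗I₈)·C-P((132))·(Ry(β)⊗I₈)·C-P((123))·(Ry(α)⊗I₈)`,
the top-left ancilla block `(⟨0|⊗I₈)·U·(|0⟩⊗I₈)` equals `Π₃`. -/
theorem stmt12 :
    (Matrix.of fun v w : Fin 3 → Fin 2 =>
       ((Ry (-Real.arctan (Real.sqrt 2)) ⊗ₖ (1 : Matrix (Fin 3 → Fin 2) (Fin 3 → Fin 2) ℂ)) *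
          CP c132 *
          (Ry (Real.arccos (-(1 / 3))) ⊗ₖ (1 : Matrix (Fin 3 → Fin 2) (Fin 3 → Fin 2) ℂ)) *
          CP c123 *
          (Ry (-Real.arctan (Real.sqrt 2)) ⊗ₖ (1 : Matrix (Fin 3 → Fin 2) (Fin 3 → Fin 2) ℂ)))
         ((0 : Fin 2), v) ((0 : Fin 2), w))
      = symProj 3 2 := by
  have h3 : √3 * √3 = 3 := Real.mul_self_sqrt zero_le_three
  have h2 : √2 * √2 = 2 := Real.mul_self_sqrt zero_le_two
  have hcos : Real.cos (-Real.arctan √2) * Real.cos (Real.arccos (-(1 / 3)) / 2) = 3⁻¹ := by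
    rw [cos_neg_arctan_sqrt_two, cos_half_arccos_neg_third, ← mul_inv, h3]
  have hsin : Real.sin (-Real.arctan √2) * Real.sin (Real.arccos (-(1 / 3)) / 2) / 2 = -3⁻¹ := by
    rw [sin_neg_arctan_sqrt_two, sin_half_arccos_neg_third, neg_mul, div_mul_div_comm, h2, h3]
    norm_num
  change (_ : Matrix _ _ ℂ).submatrix (Prod.mk 0) (Prod.mk 0) = _
  rw [CP_eq_controlled, CP_eq_controlled,
    submatrix_zero_Ry_controlled_Ry_controlled_Ry _ _ _ _ permMat_c132_mul_c123, hcos, hsin,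
    symProj_three_two]
  push_cast
  module
end

section
/- Let ρ be any 2×2 complex matrix with tr(ρ) = 1. Then tr_{23}[Π₃ ρ^{⊗3} Π₃] = (1/3)·ρ + (2/3)·ρ³, where tr_{23} denotes the partial trace over the second and third tensor factors of (ℂ²)^{⊗3}. (Output of the three-copy symmetric-projection purification circuit.) -/
open Matrix

/-- `n`-fold tensor (Kronecker) power of a `d×d` matrix. -/
noncomputable def tpow {d : ℕ} (A : Matrix (Fin d) (Fin d) ℂ) (n : ℕ) :
    Matrix (Fin n → Fin d) (Fin n → Fin d) ℂ :=
  Matrix.of fun v w => ∏ i, A (v i) (w i)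

/-- Partial trace over all tensor factors except the first. -/
noncomputable def ptrRest {n d : ℕ}
    (M : Matrix (Fin (n + 1) → Fin d) (Fin (n + 1) → Fin d) ℂ) :
    Matrix (Fin d) (Fin d) ℂ :=
  Matrix.of fun i j => ∑ t : Fin n → Fin d, M (Fin.cons i t) (Fin.cons j t)

/-!
Because `ρ^{⊗3}` commutes with every factor permutation `P(σ)` and `Π₃` absorbs them,
`Π₃ ρ^{⊗3} Π₃ = ρ^{⊗3} Π₃` is the average of `ρ^{⊗3} P(σ)` over `S₃`. Tracing out the last two
factors of `ρ^{⊗3} P(σ)` contracts indices along the cycles of `σ`: in any dimension the six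
permutations give `(tr ρ)² ρ`, `tr ρ · ρ²` (twice), `tr(ρ²) ρ` and `ρ³` (twice). For a `2 × 2`
matrix of trace one, Cayley–Hamilton `ρ² = ρ - det ρ` yields `tr(ρ²) = 1 - 2 det ρ` and
`ρ³ = ρ² - det ρ · ρ`, which collapses the average to `ρ/3 + 2ρ³/3`.
-/

section PermMat

variable {n d : ℕ}

lemma permMat_mul_apply (σ : Equiv.Perm (Fin n)) (M : Matrix (Fin n → Fin d) (Fin n → Fin d) ℂ)
    (v w : Fin n → Fin d) : (permMat n d σ * M) v w = M (v ∘ σ.symm) w := by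
  simp only [permMat, mul_apply, of_apply, ite_mul, one_mul, zero_mul,
    ← Equiv.comp_symm_eq σ, Finset.sum_ite_eq, Finset.mem_univ, if_true]

lemma mul_permMat_apply (σ : Equiv.Perm (Fin n)) (M : Matrix (Fin n → Fin d) (Fin n → Fin d) ℂ)
    (v w : Fin n → Fin d) : (M * permMat n d σ) v w = M v (w ∘ σ) := by
  simp only [permMat, mul_apply, of_apply, mul_ite, mul_one, mul_zero,
    Finset.sum_ite_eq', Finset.mem_univ, if_true]

lemma permMat_mul_permMat (σ τ : Equiv.Perm (Fin n)) :
    permMat n d σ * permMat n d τ = permMat n d (τ * σ) := by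
  ext v w
  rw [permMat_mul_apply]
  simp only [permMat, of_apply, Equiv.Perm.coe_mul, ← Function.comp_assoc, Equiv.comp_symm_eq]
  rfl

lemma permMat_mul_symProj (σ : Equiv.Perm (Fin n)) :
    permMat n d σ * symProj n d = symProj n d := by
  simp only [symProj, mul_smul_comm, Finset.mul_sum, permMat_mul_permMat]
  congr 1
  exact Fintype.sum_equiv (Equiv.mulRight σ) _ _ fun _ => rfl

lemma symProj_mul_symProj : symProj n d * symProj n d = symProj n d := by
  nth_rewrite 1 [symProj]
  simp only [smul_mul_assoc, Finset.sum_mul, permMat_mul_symProj, Finset.sum_const,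
    Finset.card_univ, Fintype.card_perm, Fintype.card_fin]
  rw [← Nat.cast_smul_eq_nsmul ℂ, smul_smul, inv_mul_cancel₀ (mod_cast n.factorial_ne_zero),
    one_smul]

lemma tpow_mul_permMat (A : Matrix (Fin d) (Fin d) ℂ) (σ : Equiv.Perm (Fin n)) :
    tpow A n * permMat n d σ = permMat n d σ * tpow A n := by
  ext v w
  rw [permMat_mul_apply, mul_permMat_apply]
  simp only [tpow, of_apply, Function.comp_apply]
  exact (Equiv.prod_comp σ.symm _).symm.trans (by simp)

lemma tpow_mul_symProj (A : Matrix (Fin d) (Fin d) ℂ) :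
    tpow A n * symProj n d = symProj n d * tpow A n := by
  simp only [symProj, mul_smul_comm, smul_mul_assoc, Finset.mul_sum, Finset.sum_mul,
    tpow_mul_permMat]

lemma symProj_mul_tpow_mul_symProj (A : Matrix (Fin d) (Fin d) ℂ) :
    symProj n d * tpow A n * symProj n d = tpow A n * symProj n d := by
  rw [← tpow_mul_symProj, mul_assoc, symProj_mul_symProj]

lemma ptrRest_add (M N : Matrix (Fin (n + 1) → Fin d) (Fin (n + 1) → Fin d) ℂ) :
    ptrRest (M + N) = ptrRest M + ptrRest N := by
  ext i j
  simp only [ptrRest, Matrix.add_apply, of_apply, Finset.sum_add_distrib]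

lemma ptrRest_smul (c : ℂ) (M : Matrix (Fin (n + 1) → Fin d) (Fin (n + 1) → Fin d) ℂ) :
    ptrRest (c • M) = c • ptrRest M := by
  ext i j
  simp only [ptrRest, Matrix.smul_apply, of_apply, smul_eq_mul, Finset.mul_sum]

end PermMat

lemma sum_perm_fin_three {M : Type*} [AddCommMonoid M] (f : Equiv.Perm (Fin 3) → M) :
    ∑ σ, f σ =
      f 1 + f (Equiv.swap 0 1) + f (Equiv.swap 0 2) + f (Equiv.swap 1 2) +
        f (Equiv.swap 0 1 * Equiv.swap 1 2) + f (Equiv.swap 1 2 * Equiv.swap 0 1) := by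
  rw [show (Finset.univ : Finset (Equiv.Perm (Fin 3))) =
    ⟨([1, Equiv.swap 0 1, Equiv.swap 0 2, Equiv.swap 1 2,
     Equiv.swap 0 1 * Equiv.swap 1 2, Equiv.swap 1 2 * Equiv.swap 0 1] : List (Equiv.Perm (Fin 3))),
     by decide⟩ from by decide]
  simp only [Finset.sum_mk, Multiset.map_coe, List.map_cons, List.map_nil, Multiset.sum_coe,
    List.sum_cons, List.sum_nil, add_zero]
  abel

lemma sum_fin_two_arrow {α M : Type*} [Fintype α] [AddCommMonoid M] (f : (Fin 2 → α) → M) :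
    ∑ t, f t = ∑ k, ∑ l, f ![k, l] := by
  rw [← (finTwoArrowEquiv α).symm.sum_comp, Fintype.sum_prod_type]
  rfl

section ThreeCopies

variable {d : ℕ} (A : Matrix (Fin d) (Fin d) ℂ)

lemma ptrRest_tpow_mul_permMat_apply (σ : Equiv.Perm (Fin 3)) (a b : Fin d) :
    ptrRest (n := 2) (tpow A 3 * permMat 3 d σ) a b =
      ∑ k, ∑ l, A a (![b, k, l] (σ 0)) * A k (![b, k, l] (σ 1)) * A l (![b, k, l] (σ 2)) := by
  simp only [ptrRest, of_apply, sum_fin_two_arrow, mul_permMat_apply, tpow, Fin.prod_univ_three,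
    Function.comp_apply]
  rfl

lemma ptrRest_tpow_mul_permMat_one :
    ptrRest (n := 2) (tpow A 3 * permMat 3 d 1) = A.trace ^ 2 • A := by
  ext a b
  rw [ptrRest_tpow_mul_permMat_apply]
  simp [trace, sq, Finset.mul_sum, mul_comm, mul_left_comm]

lemma ptrRest_tpow_mul_permMat_swap_zero_one :
    ptrRest (n := 2) (tpow A 3 * permMat 3 d (Equiv.swap 0 1)) = A.trace • A ^ 2 := by
  ext a b
  rw [ptrRest_tpow_mul_permMat_apply]
  simp [Equiv.swap_apply_def, trace, sq, mul_apply, Finset.mul_sum, mul_comm, mul_left_comm]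

lemma ptrRest_tpow_mul_permMat_swap_zero_two :
    ptrRest (n := 2) (tpow A 3 * permMat 3 d (Equiv.swap 0 2)) = A.trace • A ^ 2 := by
  ext a b
  rw [ptrRest_tpow_mul_permMat_apply, Finset.sum_comm]
  simp [Equiv.swap_apply_def, trace, sq, mul_apply, Finset.mul_sum, mul_comm, mul_left_comm]

lemma ptrRest_tpow_mul_permMat_swap_one_two :
    ptrRest (n := 2) (tpow A 3 * permMat 3 d (Equiv.swap 1 2)) = (A ^ 2).trace • A := by
  ext a b
  rw [ptrRest_tpow_mul_permMat_apply]
  simp [Equiv.swap_apply_def, trace, sq, mul_apply, Finset.mul_sum, mul_comm, mul_left_comm]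

lemma ptrRest_tpow_mul_permMat_cycle :
    ptrRest (n := 2) (tpow A 3 * permMat 3 d (Equiv.swap 0 1 * Equiv.swap 1 2)) = A ^ 3 := by
  ext a b
  rw [ptrRest_tpow_mul_permMat_apply]
  simp [Equiv.swap_apply_def, pow_three, mul_apply, Finset.mul_sum, mul_comm, mul_left_comm]

lemma ptrRest_tpow_mul_permMat_cycle_inv :
    ptrRest (n := 2) (tpow A 3 * permMat 3 d (Equiv.swap 1 2 * Equiv.swap 0 1)) = A ^ 3 := by
  ext a b
  rw [ptrRest_tpow_mul_permMat_apply, Finset.sum_comm]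
  simp [Equiv.swap_apply_def, pow_three, mul_apply, Finset.mul_sum, mul_comm, mul_left_comm]

lemma ptrRest_tpow_mul_symProj_three :
    ptrRest (n := 2) (tpow A 3 * symProj 3 d) =
      (6 : ℂ)⁻¹ •
        (A.trace ^ 2 • A + (2 * A.trace) • A ^ 2 + (A ^ 2).trace • A + (2 : ℂ) • A ^ 3) := by
  rw [symProj, mul_smul_comm, Finset.mul_sum, sum_perm_fin_three]
  simp only [ptrRest_smul, ptrRest_add, ptrRest_tpow_mul_permMat_one,
    ptrRest_tpow_mul_permMat_swap_zero_one, ptrRest_tpow_mul_permMat_swap_zero_two,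
    ptrRest_tpow_mul_permMat_swap_one_two, ptrRest_tpow_mul_permMat_cycle,
    ptrRest_tpow_mul_permMat_cycle_inv]
  rw [show ((Nat.factorial 3 : ℕ) : ℂ) = 6 by norm_num [Nat.factorial]]
  module

end ThreeCopies

lemma sq_eq_trace_smul_sub_det_smul_one {R : Type*} [CommRing R]
    (A : Matrix (Fin 2) (Fin 2) R) :
    A ^ 2 = A.trace • A - A.det • 1 := by
  ext i j
  fin_cases i <;> fin_cases j <;> simp [sq, mul_apply, trace_fin_two, det_fin_two] <;> ring

lemma trace_sq_fin_two {R : Type*} [CommRing R] (A : Matrix (Fin 2) (Fin 2) R) :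
    (A ^ 2).trace = A.trace ^ 2 - 2 * A.det := by
  rw [sq_eq_trace_smul_sub_det_smul_one, trace_sub, trace_smul, trace_smul, trace_one,
    Fintype.card_fin]
  simp only [smul_eq_mul, Nat.cast_ofNat]
  ring

/-- output of the three-copy purification circuit. For any
`2×2` complex matrix `ρ` with `tr ρ = 1`,
`tr₂₃[Π₃ ρ^{⊗3} Π₃] = (1/3)·ρ + (2/3)·ρ³`. -/
theorem stmt15 (ρ : Matrix (Fin 2) (Fin 2) ℂ) (hρ : ρ.trace = 1) :
    ptrRest (n := 2) (symProj 3 2 * tpow ρ 3 * symProj 3 2)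
      = ((1 : ℂ) / 3) • ρ + ((2 : ℂ) / 3) • ρ ^ 3 := by
  have hsq : ρ ^ 2 = ρ - ρ.det • 1 := by rw [sq_eq_trace_smul_sub_det_smul_one, hρ, one_smul]
  have hcube : ρ ^ 3 = ρ ^ 2 - ρ.det • ρ := by
    rw [pow_succ', hsq, mul_sub, mul_smul_comm, mul_one, ← sq, hsq]
  have htrace : (ρ ^ 2).trace = 1 - 2 * ρ.det := by rw [trace_sq_fin_two, hρ, one_pow]
  rw [symProj_mul_tpow_mul_symProj, ptrRest_tpow_mul_symProj_three, hρ, htrace, hcube, hsq]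
  module
end
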